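/- For μ ∈ ℂ and z₁,…,zₙ reals > 1, the function ψ_μ^B = ∏_{r=1}^n (z_r^{1/2} - z_r^{-1/2})^μ satisfies ∑_{r=1}^n (z_r∂_{z_r})²(ψ_μ^B) = [nμ²/4 + μ(μ-1) ∑_{r=1}^n z_r/(z_r - 1)²] ψ_μ^B. -/

import Mathlib

/-!
The variables separate: `ψ_μ^B` is a product of one-variable factors `u(t)^μ` with
`u(t) = t^{1/2} - t^{-1/2}`, so `(z_r ∂_{z_r})²` only sees the `r`-th factor. Writing
`θ = t d/dt`, the logarithmic derivative is `θu/u = h := (t+1)/(2(t-1))`, hence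
`θ(u^μ) = μ h u^μ` and `θ²(u^μ) = (μ θh + μ² h²) u^μ`, where `θh = -t/(t-1)²` and
`h² = 1/4 + t/(t-1)²`.
-/

/-- The operator `z_r ∂_{z_r}` on complex-valued functions of `n` real variables. -/
noncomputable def zDp {n : ℕ} (r : Fin n) (f : (Fin n → ℝ) → ℂ) : (Fin n → ℝ) → ℂ :=
  fun z => (z r : ℂ) * deriv (fun t => f (Function.update z r t)) (z r)

/-- `ψ_μ^B(z) = ∏_r (z_r^{1/2} - z_r^{-1/2})^μ`. -/
noncomputable def psiB (n : ℕ) (μ : ℂ) : (Fin n → ℝ) → ℂ :=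
  fun z => ∏ r : Fin n, ((Real.sqrt (z r) - (Real.sqrt (z r))⁻¹ : ℝ) : ℂ) ^ μ

open Complex Filter Function Finset Topology

noncomputable def eulerOp (φ : ℝ → ℂ) (t : ℝ) : ℂ := t * deriv φ t

theorem zDp_zDp_apply {n : ℕ} (r : Fin n) (F : (Fin n → ℝ) → ℂ) (z : Fin n → ℝ) :
    zDp r (zDp r F) z = eulerOp (eulerOp fun t => F (update z r t)) (z r) := by
  simp only [zDp, eulerOp, update_self, update_idem]
  rfl

theorem eulerOp_const_mul (c : ℂ) (φ : ℝ → ℂ) :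
    eulerOp (fun t => c * φ t) = fun t => c * eulerOp φ t := by
  funext t
  rw [eulerOp, eulerOp, deriv_const_mul_field']
  ring

noncomputable def psiFactor (μ : ℂ) (t : ℝ) : ℂ := ((√t - (√t)⁻¹ : ℝ) : ℂ) ^ μ

theorem psiB_update {n : ℕ} (μ : ℂ) (z : Fin n → ℝ) (r : Fin n) (t : ℝ) :
    psiB n μ (update z r t) = (∏ s ∈ univ.erase r, psiFactor μ (z s)) * psiFactor μ t := by
  change ∏ s, psiFactor μ (update z r t s) = _
  rw [← mul_prod_erase univ _ (mem_univ r), update_self, mul_comm]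
  congr 1
  exact prod_congr rfl fun s hs => by rw [update_of_ne (ne_of_mem_erase hs)]

theorem HasDerivAt.ofReal_cpow_const_of_pos {u : ℝ → ℝ} {u' t : ℝ} (hu : HasDerivAt u u' t)
    (hpos : 0 < u t) (μ : ℂ) :
    HasDerivAt (fun s => (u s : ℂ) ^ μ) (μ * (u' / u t : ℝ) * (u t : ℂ) ^ μ) t := by
  have hne : (u t : ℂ) ≠ 0 := ofReal_ne_zero.2 hpos.ne'
  refine ((hasStrictDerivAt_cpow_const (c := μ) (ofReal_mem_slitPlane.2 hpos)).hasDerivAt.comp t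
    hu.ofReal_comp).congr_deriv ?_
  rw [cpow_sub _ _ hne, cpow_one]
  push_cast
  field_simp

theorem hasDerivAt_sqrt_sub_inv_sqrt {t : ℝ} (ht : 0 < t) :
    HasDerivAt (fun s => √s - (√s)⁻¹) ((t + 1) / (2 * t * √t)) t := by
  have hs : 0 < √t := Real.sqrt_pos.2 ht
  refine ((Real.hasDerivAt_sqrt ht.ne').sub
    ((Real.hasDerivAt_sqrt ht.ne').inv hs.ne')).congr_deriv ?_
  rw [Real.sq_sqrt ht.le]
  field_simp
  ring

theorem hasDerivAt_psiFactor (μ : ℂ) {t : ℝ} (ht : 1 < t) :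
    HasDerivAt (psiFactor μ) (μ * ((t + 1) / (2 * t * (t - 1))) * psiFactor μ t) t := by
  have ht0 : 0 < t := by linarith
  have hs : 1 < √t := Real.lt_sqrt_of_sq_lt (by simpa using ht)
  have hpos : 0 < √t - (√t)⁻¹ := sub_pos.2 ((inv_lt_one_of_one_lt₀ hs).trans hs)
  have hlog : (t + 1) / (2 * t * √t) / (√t - (√t)⁻¹) = (t + 1) / (2 * t * (t - 1)) := by
    have : t - 1 ≠ 0 := by linarith
    field_simp
    rw [Real.sq_sqrt ht0.le, div_self this]
  refine ((hasDerivAt_sqrt_sub_inv_sqrt ht0).ofReal_cpow_const_of_pos hpos μ).congr_deriv ?_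
  rw [hlog, psiFactor]
  push_cast
  ring

theorem eulerOp_psiFactor (μ : ℂ) {t : ℝ} (ht : 1 < t) :
    eulerOp (psiFactor μ) t = μ * ((t + 1) / (2 * (t - 1))) * psiFactor μ t := by
  have ht0 : (t : ℂ) ≠ 0 := ofReal_ne_zero.2 (by linarith)
  rw [eulerOp, (hasDerivAt_psiFactor μ ht).deriv]
  field_simp

theorem eulerOp_eulerOp_psiFactor (μ : ℂ) {t : ℝ} (ht : 1 < t) :
    eulerOp (eulerOp (psiFactor μ)) t
      = (μ ^ 2 / 4 + μ * (μ - 1) * (t / (t - 1) ^ 2)) * psiFactor μ t := by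
  have ht1 : (t : ℂ) - 1 ≠ 0 := sub_ne_zero.2 (ofReal_ne_one.2 ht.ne')
  have hid : HasDerivAt (fun s : ℝ => (s : ℂ)) 1 t := (hasDerivAt_id t).ofReal_comp
  have hratio : HasDerivAt (fun s : ℝ => ((s : ℂ) + 1) / (2 * ((s : ℂ) - 1)))
      (-1 / ((t : ℂ) - 1) ^ 2) t := by
    refine ((hid.add_const 1).div ((hid.sub_const 1).const_mul 2)
      (mul_ne_zero two_ne_zero ht1)).congr_deriv ?_
    field_simp
    ring
  have hev : eulerOp (psiFactor μ) =ᶠ[𝓝 t]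
      fun s => μ * ((s + 1) / (2 * (s - 1))) * psiFactor μ s :=
    (eventually_gt_nhds ht).mono fun s hs => eulerOp_psiFactor μ hs
  rw [eulerOp, hev.deriv_eq, ((hratio.const_mul μ).fun_mul (hasDerivAt_psiFactor μ ht)).deriv]
  have ht0 : (t : ℂ) ≠ 0 := ofReal_ne_zero.2 (by linarith)
  field_simp
  ring

theorem zDp_zDp_psiB {n : ℕ} (μ : ℂ) {z : Fin n → ℝ} (r : Fin n) (hr : 1 < z r) :
    zDp r (zDp r (psiB n μ)) z
      = (μ ^ 2 / 4 + μ * (μ - 1) * (z r / (z r - 1) ^ 2)) * psiB n μ z := by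
  have hpsi := psiB_update μ z r (z r)
  rw [update_eq_self] at hpsi
  simp only [zDp_zDp_apply, psiB_update, eulerOp_const_mul, eulerOp_eulerOp_psiFactor μ hr, hpsi]
  ring

/-- `∑_r (z_r∂_{z_r})² ψ_μ^B = [nμ²/4 + μ(μ-1) ∑_r z_r/(z_r-1)²] ψ_μ^B` for `z_r > 1`. -/
theorem psiB_eq (n : ℕ) (μ : ℂ) (z : Fin n → ℝ) (hz : ∀ r, 1 < z r) :
    ∑ r : Fin n, zDp r (zDp r (psiB n μ)) z
      = ((n : ℂ) * μ ^ 2 / 4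
          + μ * (μ - 1) * ((∑ r : Fin n, z r / (z r - 1) ^ 2 : ℝ) : ℂ))
        * psiB n μ z := by
  rw [sum_congr rfl fun r _ => zDp_zDp_psiB μ r (hz r), ← sum_mul, sum_add_distrib, ← mul_sum,
    sum_const, card_univ, Fintype.card_fin, nsmul_eq_mul]
  push_cast
  ring
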